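/- arXiv:2510.04059 — 5 statements merged into one kernel-verified Lean document; each statement's English description precedes it below -/
import Mathlib

section
/- For every nonnegative integer n and every x in [-1,1], the monomial x^n equals the expectation E[T_{Z_n}(x)], where Z_n is the sum of n i.i.d. Rademacher random variables (each ±1 with probability 1/2) and T_d denotes the Chebyshev polynomial of the first kind of degree |d|. -/
open Polynomial Chebyshev Finset

/-- `Z ε` is the value of the random walk after `n` Rademacher steps determined by `ε`. -/
def radWalk {n : ℕ} (ε : Fin n → Bool) : ℤ :=
  ∑ i : Fin n, (if ε i then (1 : ℤ) else -1)

lemma radWalk_cons {n : ℕ} (b : Bool) (ε : Fin n → Bool) :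
    radWalk (Fin.cons b ε) = (if b then (1 : ℤ) else -1) + radWalk ε := by
  simp [radWalk, Fin.sum_univ_succ]

lemma cheb_step (j : ℤ) (x : ℝ) :
    (T ℝ (j + 1)).eval x + (T ℝ (j - 1)).eval x = 2 * x * (T ℝ j).eval x := by
  have h := Polynomial.Chebyshev.T_add_two ℝ (j - 1)
  have h1 : j - 1 + 2 = j + 1 := by ring
  have h2 : j - 1 + 1 = j := by ring
  rw [h1, h2] at h
  rw [h]
  simp [Polynomial.eval_sub, Polynomial.eval_mul]

/-- For every `n` and `x ∈ [-1,1]`, `x ^ n = E[T_{Z_n}(x)]` where `Z_n` is a sum of `n`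
i.i.d. Rademacher random variables (expectation written as a uniform average over the
`2 ^ n` equally likely sign sequences), and `T` is the Chebyshev polynomial of the first
kind (satisfying `T (-d) = T d`). -/
theorem monomial_eq_expectation_chebyshev (n : ℕ) (x : ℝ)
    (hx : x ∈ Set.Icc (-1 : ℝ) 1) :
    x ^ n = (1 / 2 ^ n : ℝ) *
      ∑ ε : Fin n → Bool, (Polynomial.Chebyshev.T ℝ (radWalk ε)).eval x := by
  induction n with
  | zero => simp [radWalk]
  | succ n ih =>
    have hsum : ∑ ε : Fin (n+1) → Bool, (T ℝ (radWalk ε)).eval x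
        = ∑ ε : Fin n → Bool,
            ((T ℝ (radWalk ε + 1)).eval x + (T ℝ (radWalk ε - 1)).eval x) := by
      rw [Fintype.sum_equiv (Fin.consEquiv (fun _ : Fin (n+1) => Bool)).symm _
          (fun p : Bool × (Fin n → Bool) => (T ℝ (radWalk (Fin.cons p.1 p.2))).eval x)
          (fun ε => by simp [Fin.consEquiv, Fin.cons_self_tail])]
      rw [Fintype.sum_prod_type, Fintype.sum_bool]
      rw [← Finset.sum_add_distrib]
      refine Finset.sum_congr rfl fun ε _ => ?_
      rw [radWalk_cons, radWalk_cons]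
      norm_num [add_comm, sub_eq_add_neg]
    rw [hsum]
    have : ∑ ε : Fin n → Bool,
        ((T ℝ (radWalk ε + 1)).eval x + (T ℝ (radWalk ε - 1)).eval x)
        = 2 * x * ∑ ε : Fin n → Bool, (T ℝ (radWalk ε)).eval x := by
      rw [Finset.mul_sum]
      exact Finset.sum_congr rfl fun ε _ => cheb_step _ x
    rw [this, pow_succ, ih]
    ring
end

section
/- For any positive integers n and d, the degree-d Chebyshev truncation p_{n,d}(x) = sum_{j=0}^{d} c_{n,j} T_j(x) of x^n satisfies sup_{x in [-1,1]} |x^n - p_{n,d}(x)| ≤ 2 exp(-d²/(2n)). -/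
open Finset

/-- The Chebyshev expansion coefficients of the monomial `x ^ n`. -/
noncomputable def chebCoeff (n k : ℕ) : ℝ :=
  if k = 0 then (if Even n then (n.choose (n / 2) : ℝ) / 2 ^ n else 0)
  else if k ≤ n ∧ Even (n - k) then (n.choose ((n - k) / 2) : ℝ) / 2 ^ (n - 1) else 0

/-- The degree-`d` Chebyshev truncation `p_{n,d}` of `x ^ n`. -/
noncomputable def chebTrunc (n d : ℕ) (x : ℝ) : ℝ :=
  ∑ j ∈ Finset.range (d + 1), chebCoeff n j * (Polynomial.Chebyshev.T ℝ (j : ℤ)).eval x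

lemma cos_pow_expand (n : ℕ) (θ : ℝ) :
    Real.cos θ ^ n * 2 ^ n
      = ∑ k ∈ range (n + 1), (n.choose k : ℝ) * Real.cos ((2 * (k : ℝ) - n) * θ) := by
  have hc : ((2 : ℂ) * Complex.cos (θ : ℂ)) ^ n
      = ∑ k ∈ range (n + 1),
          (n.choose k : ℂ) * Complex.exp ((((2 * (k : ℝ) - n) * θ : ℝ)) * Complex.I) := by
    rw [Complex.two_cos, add_pow]
    refine Finset.sum_congr rfl fun k hk => ?_
    rw [mem_range, Nat.lt_succ_iff] at hk
    rw [← Complex.exp_nat_mul, ← Complex.exp_nat_mul, ← Complex.exp_add, mul_comm]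
    congr 2
    push_cast [hk]
    ring
  have h2 : ((2 : ℂ) * Complex.cos (θ : ℂ)) = ((2 * Real.cos θ : ℝ) : ℂ) := by
    push_cast [Complex.ofReal_cos]; ring
  have := congrArg Complex.re hc
  rw [h2, ← Complex.ofReal_pow, Complex.ofReal_re, Complex.re_sum] at this
  calc Real.cos θ ^ n * 2 ^ n = (2 * Real.cos θ) ^ n := by ring
    _ = _ := by
        rw [this]
        refine Finset.sum_congr rfl fun k hk => ?_
        have : ((n.choose k : ℂ)) = ((n.choose k : ℝ) : ℂ) := by push_cast; rfl
        rw [this, Complex.re_ofReal_mul, Complex.exp_ofReal_mul_I_re]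

lemma fiber_sum (n j : ℕ) (hn : 0 < n) :
    ∑ k ∈ (range (n + 1)).filter (fun k : ℕ => (2 * (k : ℤ) - n).natAbs = j), (n.choose k : ℝ)
      = 2 ^ n * chebCoeff n j := by
  rcases eq_or_ne j 0 with rfl | hj
  · by_cases he : Even n
    · obtain ⟨m, hm⟩ := he
      have hfil : (range (n + 1)).filter (fun k : ℕ => (2 * (k : ℤ) - n).natAbs = 0) = {m} := by
        ext k; simp only [mem_filter, mem_range, mem_singleton]; omega
      rw [hfil, Finset.sum_singleton]
      have he : Even n := ⟨m, hm⟩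
      rw [chebCoeff, if_pos rfl, if_pos he, show n / 2 = m by omega]
      field_simp
    · have hfil : (range (n + 1)).filter (fun k : ℕ => (2 * (k : ℤ) - n).natAbs = 0) = ∅ := by
        ext k; simp only [mem_filter, mem_range, notMem_empty, iff_false, not_and]
        rw [Nat.even_iff] at he; omega
      rw [hfil, Finset.sum_empty, chebCoeff, if_pos rfl, if_neg he, mul_zero]
  · by_cases hc : j ≤ n ∧ Even (n - j)
    · obtain ⟨hjn, m, hm⟩ := hc
      have hfil : (range (n + 1)).filter (fun k : ℕ => (2 * (k : ℤ) - n).natAbs = j)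
          = {m, m + j} := by
        ext k; simp only [mem_filter, mem_range, mem_insert, mem_singleton]; omega
      rw [hfil, Finset.sum_pair (by omega : m ≠ m + j)]
      have hsym : n.choose (m + j) = n.choose m := by
        rw [← Nat.choose_symm (by omega : m + j ≤ n)]; congr 1; omega
      rw [hsym, chebCoeff, if_neg hj, if_pos ⟨hjn, ⟨m, hm⟩⟩, show (n - j) / 2 = m by omega]
      have h2 : (2 : ℝ) ^ n = 2 * 2 ^ (n - 1) := by
        rw [← pow_succ']; congr 1; omega
      rw [h2]
      field_simp
      ring
    · have hfil : (range (n + 1)).filter (fun k : ℕ => (2 * (k : ℤ) - n).natAbs = j) = ∅ := by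
        ext k; simp only [mem_filter, mem_range, notMem_empty, iff_false, not_and]
        intro hk hAbs
        apply hc
        rw [Nat.even_iff]
        omega
      rw [hfil, Finset.sum_empty, chebCoeff, if_neg hj, if_neg hc, mul_zero]

lemma chernoff (n d : ℕ) (hn : 0 < n) (hd : 0 < d) :
    ∑ k ∈ (range (n + 1)).filter (fun k : ℕ => (d : ℤ) < (n : ℤ) - 2 * k), (n.choose k : ℝ)
      ≤ 2 ^ n * Real.exp (-(d : ℝ) ^ 2 / (2 * n)) := by
  set lam : ℝ := d / n with hlam
  have hn' : (0 : ℝ) < n := by exact_mod_cast hn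
  have hlam0 : 0 ≤ lam := by positivity
  have step1 : ∑ k ∈ (range (n + 1)).filter (fun k : ℕ => (d : ℤ) < (n : ℤ) - 2 * k),
      (n.choose k : ℝ)
      ≤ ∑ k ∈ range (n + 1), (n.choose k : ℝ) * Real.exp (lam * (((n : ℝ) - 2 * k) - d)) := by
    refine le_trans (Finset.sum_le_sum fun k hk => ?_)
      (Finset.sum_le_sum_of_subset_of_nonneg (Finset.filter_subset _ _) fun k _ _ => by
        positivity)
    rw [mem_filter] at hk
    have h0 : (d : ℤ) + 1 ≤ (n : ℤ) - 2 * k := hk.2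
    have h1 : (1 : ℝ) ≤ ((n : ℝ) - 2 * k) - d := by
      have h0' : (1 : ℤ) ≤ (n : ℤ) - 2 * k - d := by linarith
      have : ((1 : ℤ) : ℝ) ≤ (((n : ℤ) - 2 * k - d : ℤ) : ℝ) := by exact_mod_cast h0'
      push_cast at this; linarith
    have h2 : (1 : ℝ) ≤ Real.exp (lam * (((n : ℝ) - 2 * k) - d)) :=
      Real.one_le_exp (by nlinarith)
    exact le_mul_of_one_le_right (Nat.cast_nonneg _) h2
  have step2 : ∑ k ∈ range (n + 1), (n.choose k : ℝ) * Real.exp (lam * (((n : ℝ) - 2 * k) - d))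
      = Real.exp (-(lam * d)) * (Real.exp (-lam) + Real.exp lam) ^ n := by
    rw [add_pow, Finset.mul_sum]
    refine Finset.sum_congr rfl fun k hk => ?_
    rw [mem_range, Nat.lt_succ_iff] at hk
    rw [← Real.exp_nat_mul, ← Real.exp_nat_mul, ← Real.exp_add,
      show ((n - k : ℕ) : ℝ) = (n : ℝ) - k by push_cast [hk]; ring,
      ← mul_assoc, ← Real.exp_add, mul_comm]
    congr 2
    ring
  have step3 : (Real.exp (-lam) + Real.exp lam) ^ n ≤ (2 * Real.exp (lam ^ 2 / 2)) ^ n := by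
    apply pow_le_pow_left₀ (by positivity)
    have := Real.cosh_le_exp_half_sq lam
    rw [Real.cosh_eq] at this
    linarith
  calc _ ≤ Real.exp (-(lam * d)) * (Real.exp (-lam) + Real.exp lam) ^ n := by
        rw [← step2]; exact step1
    _ ≤ Real.exp (-(lam * d)) * (2 * Real.exp (lam ^ 2 / 2)) ^ n := by
        have := Real.exp_pos (-(lam * d)); nlinarith [step3, Real.exp_pos (-(lam * d))]
    _ = 2 ^ n * Real.exp (-(d : ℝ) ^ 2 / (2 * n)) := by
        rw [mul_pow, ← Real.exp_nat_mul, mul_comm ((2:ℝ)^n) _, ← mul_assoc, ← Real.exp_add,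
          mul_comm]
        congr 2
        rw [hlam]; field_simp; ring

lemma sym_sum (n d : ℕ) :
    ∑ k ∈ (range (n + 1)).filter (fun k : ℕ => (d : ℤ) < 2 * k - n), (n.choose k : ℝ)
      = ∑ k ∈ (range (n + 1)).filter (fun k : ℕ => (d : ℤ) < (n : ℤ) - 2 * k),
          (n.choose k : ℝ) := by
  refine Finset.sum_nbij' (fun k => n - k) (fun k => n - k) ?_ ?_ ?_ ?_ ?_
  · intro k hk
    simp only [mem_filter, mem_range] at *
    omega
  · intro k hk
    simp only [mem_filter, mem_range] at *
    omega
  · intro k hk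
    simp only [mem_filter, mem_range] at hk
    show n - (n - k) = k
    omega
  · intro k hk
    simp only [mem_filter, mem_range] at hk
    show n - (n - k) = k
    omega
  · intro k hk
    simp only [mem_filter, mem_range] at hk
    have h : k ≤ n := by omega
    show ((n.choose k : ℝ)) = (n.choose (n - k) : ℝ)
    rw [Nat.choose_symm h]

/-- `sup_{x ∈ [-1,1]} |x^n - p_{n,d}(x)| ≤ 2 exp (-d² / (2n))`. -/
theorem monomial_chebyshev_approx (n d : ℕ) (hn : 0 < n) (hd : 0 < d) :
    ∀ x ∈ Set.Icc (-1 : ℝ) 1,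
      |x ^ n - chebTrunc n d x| ≤ 2 * Real.exp (-(d : ℝ) ^ 2 / (2 * n)) := by
  intro x hx
  obtain ⟨hx1, hx2⟩ := hx
  set θ := Real.arccos x with hθ
  have hxc : Real.cos θ = x := Real.cos_arccos hx1 hx2
  set t : ℕ → ℝ := fun k => (n.choose k : ℝ) * Real.cos ((2 * (k : ℝ) - n) * θ) with ht
  set g : ℕ → ℕ := fun k => (2 * (k : ℤ) - n).natAbs with hg
  have hA : x ^ n = (∑ k ∈ range (n + 1), t k) / 2 ^ n := by
    rw [← hxc, eq_div_iff (by positivity : ((2:ℝ)^n) ≠ 0)]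
    exact cos_pow_expand n θ
  have hperj : ∀ j ∈ range (d + 1),
      chebCoeff n j * (Polynomial.Chebyshev.T ℝ (j : ℤ)).eval x
        = (∑ k ∈ (range (n + 1)).filter (fun k => g k = j), t k) / 2 ^ n := by
    intro j hj
    have hT : (Polynomial.Chebyshev.T ℝ (j : ℤ)).eval x = Real.cos (j * θ) := by
      rw [← hxc, Polynomial.Chebyshev.T_real_cos]
      norm_num
    have hsum : ∑ k ∈ (range (n + 1)).filter (fun k => g k = j), t k
        = (∑ k ∈ (range (n + 1)).filter (fun k => g k = j), (n.choose k : ℝ))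
            * Real.cos (j * θ) := by
      rw [Finset.sum_mul]
      refine Finset.sum_congr rfl fun k hk => ?_
      simp only [mem_filter, mem_range, hg] at hk
      have habs := hk.2
      have hcos : Real.cos ((2 * (k : ℝ) - n) * θ) = Real.cos (j * θ) := by
        rcases Int.natAbs_eq_iff.mp habs with h | h
        · have h' : (2 * (k : ℝ) - n) = j := by exact_mod_cast h
          rw [h']
        · have h' : (2 * (k : ℝ) - n) = -j := by exact_mod_cast h
          rw [h', neg_mul, Real.cos_neg]
      simp only [ht, hcos]
    rw [hT, hsum, fiber_sum n j hn]
    field_simp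
  have hB : chebTrunc n d x
      = (∑ k ∈ (range (n + 1)).filter (fun k => g k ≤ d), t k) / 2 ^ n := by
    rw [chebTrunc, Finset.sum_congr rfl hperj, ← Finset.sum_div]
    congr 1
    rw [← Finset.sum_fiberwise_of_maps_to (g := g) (t := range (d + 1))
      (fun k hk => by simp only [mem_filter, mem_range] at hk ⊢; omega) t]
    refine Finset.sum_congr rfl fun j hj => ?_
    rw [mem_range, Nat.lt_succ_iff] at hj
    congr 1
    rw [Finset.filter_filter]
    refine Finset.filter_congr fun k hk => ?_
    constructor
    · intro h; exact ⟨h ▸ hj, h⟩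
    · intro h; exact h.2
  have hsplit := Finset.sum_filter_add_sum_filter_not (range (n + 1)) (fun k => g k ≤ d) t
  have hErr : x ^ n - chebTrunc n d x
      = (∑ k ∈ (range (n + 1)).filter (fun k => ¬ g k ≤ d), t k) / 2 ^ n := by
    rw [hA, hB, div_sub_div_same]
    congr 1
    linarith
  rw [hErr, abs_div, abs_of_pos (by positivity : (0:ℝ) < (2:ℝ) ^ n)]
  have hbound : |∑ k ∈ (range (n + 1)).filter (fun k => ¬ g k ≤ d), t k|
      ≤ ∑ k ∈ (range (n + 1)).filter (fun k => ¬ g k ≤ d), (n.choose k : ℝ) := by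
    refine (Finset.abs_sum_le_sum_abs _ _).trans (Finset.sum_le_sum fun k hk => ?_)
    simp only [ht, abs_mul, Nat.abs_cast]
    have h1 : |Real.cos ((2 * (k : ℝ) - n) * θ)| ≤ 1 := Real.abs_cos_le_one _
    nlinarith [(Nat.cast_nonneg (n.choose k) : (0:ℝ) ≤ (n.choose k : ℝ))]
  have htail : ∑ k ∈ (range (n + 1)).filter (fun k => ¬ g k ≤ d), (n.choose k : ℝ)
      ≤ 2 * (2 ^ n * Real.exp (-(d : ℝ) ^ 2 / (2 * n))) := by
    have hunion : (range (n + 1)).filter (fun k => ¬ g k ≤ d)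
        = (range (n + 1)).filter (fun k : ℕ => (d : ℤ) < (n : ℤ) - 2 * k)
          ∪ (range (n + 1)).filter (fun k : ℕ => (d : ℤ) < 2 * k - n) := by
      ext k
      simp only [mem_filter, mem_union, mem_range, hg]
      omega
    have hdisj : Disjoint ((range (n + 1)).filter (fun k : ℕ => (d : ℤ) < (n : ℤ) - 2 * k))
        ((range (n + 1)).filter (fun k : ℕ => (d : ℤ) < 2 * k - n)) := by
      rw [Finset.disjoint_left]
      intro k h1 h2
      simp only [mem_filter] at h1 h2
      omega
    rw [hunion, Finset.sum_union hdisj, sym_sum]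
    have := chernoff n d hn hd
    linarith
  calc |∑ k ∈ (range (n + 1)).filter (fun k => ¬ g k ≤ d), t k| / 2 ^ n
      ≤ (2 * (2 ^ n * Real.exp (-(d : ℝ) ^ 2 / (2 * n)))) / 2 ^ n := by
        gcongr
        exact hbound.trans htail
    _ = 2 * Real.exp (-(d : ℝ) ^ 2 / (2 * n)) := by
        field_simp
end

section
/- For any positive integers n and d with d ≥ ceil(sqrt(2n ln(2/δ))) and any δ > 0, the degree-d polynomial p_{n,d}(x) = sum_{j=0}^{d} c_{n,j} T_j(x) δ-approximates x^n uniformly on [-1,1], i.e., sup_{x in [-1,1]} |x^n - p_{n,d}(x)| ≤ δ. -/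
open Finset

lemma complex_cos_pow (n : ℕ) (z : ℂ) :
    Complex.cos z ^ n = ∑ i ∈ Finset.range (n+1),
      (n.choose i : ℂ) / 2 ^ n * Complex.cos ((((n : ℤ) - 2*i : ℤ) : ℂ) * z) := by
  set S : ℂ := ∑ i ∈ Finset.range (n+1),
      (n.choose i : ℂ) * Complex.exp ((((2*i : ℤ) - n : ℤ) : ℂ) * z * Complex.I) with hSdef
  set S' : ℂ := ∑ i ∈ Finset.range (n+1),
      (n.choose i : ℂ) * Complex.exp ((((n : ℤ) - 2*i : ℤ) : ℂ) * z * Complex.I) with hS'def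
  have hterm : ∀ i ∈ Finset.range (n+1),
      Complex.exp (z * Complex.I) ^ i * Complex.exp (-z * Complex.I) ^ (n - i) * (n.choose i : ℂ)
      = (n.choose i : ℂ) * Complex.exp ((((2*i : ℤ) - n : ℤ) : ℂ) * z * Complex.I) := by
    intro i hi
    rw [Finset.mem_range] at hi
    rw [← Complex.exp_nat_mul, ← Complex.exp_nat_mul, ← Complex.exp_add, mul_comm]
    congr 2
    push_cast [Nat.cast_sub (by omega : i ≤ n)]
    ring
  have hS : S = S' := by
    rw [hSdef, ← Finset.sum_range_reflect]
    apply Finset.sum_congr rfl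
    intro i hi
    rw [Finset.mem_range] at hi
    have h1 : n + 1 - 1 - i = n - i := by omega
    rw [h1, Nat.choose_symm (by omega)]
    congr 3
    push_cast [Nat.cast_sub (by omega : i ≤ n)]
    ring
  have key : Complex.cos z ^ n = S / 2 ^ n := by
    rw [Complex.cos, div_pow, Commute.add_pow (Commute.all _ _),
      Finset.sum_congr rfl hterm]
  have hRHS : (∑ i ∈ Finset.range (n+1),
      (n.choose i : ℂ) / 2 ^ n * Complex.cos ((((n : ℤ) - 2*i : ℤ) : ℂ) * z))
      = (S' + S) / (2 * 2 ^ n) := by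
    rw [hS'def, hSdef, ← Finset.sum_add_distrib, Finset.sum_div]
    apply Finset.sum_congr rfl
    intro i _
    rw [Complex.cos]
    have h2 : -(((((n : ℤ) - 2*i : ℤ)) : ℂ) * z) * Complex.I
        = ((((2*i : ℤ) - n : ℤ)) : ℂ) * z * Complex.I := by push_cast; ring
    rw [h2]
    field_simp
  rw [key, hRHS, hS]
  ring

lemma real_cos_pow (n : ℕ) (θ : ℝ) :
    Real.cos θ ^ n = ∑ i ∈ Finset.range (n+1),
      (n.choose i : ℝ) / 2 ^ n * Real.cos ((((n : ℤ) - 2*i : ℤ) : ℝ) * θ) := by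
  have h := complex_cos_pow n (θ : ℂ)
  rw [← Complex.ofReal_cos] at h
  apply Complex.ofReal_injective
  push_cast
  convert h using 2 with i
  rw [← Complex.ofReal_cos]
  push_cast
  ring_nf

lemma regroup (n : ℕ) (θ : ℝ) :
    (∑ i ∈ Finset.range (n+1),
      (n.choose i : ℝ) / 2 ^ n * Real.cos ((((n : ℤ) - 2*i : ℤ) : ℝ) * θ))
    = ∑ j ∈ Finset.range (n+1), chebCoeff n j * Real.cos (j * θ) := by
  classical
  set f : ℕ → ℝ := fun i => (n.choose i : ℝ) / 2 ^ n * Real.cos ((((n : ℤ) - 2*i : ℤ) : ℝ) * θ)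
    with hf
  -- split LHS by trichotomy on 2*i vs n
  have hsplit : (∑ i ∈ Finset.range (n+1), f i)
      = (∑ i ∈ (Finset.range (n+1)).filter (fun i => 2*i < n), f i)
        + (∑ i ∈ (Finset.range (n+1)).filter (fun i => 2*i = n), f i)
        + (∑ i ∈ (Finset.range (n+1)).filter (fun i => n < 2*i), f i) := by
    have e1 : ((Finset.range (n+1)).filter (fun i => ¬ 2*i < n)).filter (fun i => 2*i = n)
        = (Finset.range (n+1)).filter (fun i => 2*i = n) := by
      rw [Finset.filter_filter]; ext i
      simp only [Finset.mem_filter, Finset.mem_range]; omega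
    have e2 : ((Finset.range (n+1)).filter (fun i => ¬ 2*i < n)).filter (fun i => ¬ 2*i = n)
        = (Finset.range (n+1)).filter (fun i => n < 2*i) := by
      rw [Finset.filter_filter]; ext i
      simp only [Finset.mem_filter, Finset.mem_range]; omega
    rw [← Finset.sum_filter_add_sum_filter_not (Finset.range (n+1)) (fun i => 2*i < n) f,
      add_assoc]
    congr 1
    rw [← Finset.sum_filter_add_sum_filter_not
      ((Finset.range (n+1)).filter (fun i => ¬ 2*i < n)) (fun i => 2*i = n) f, e1, e2]
  -- reflection: the `n < 2*i` part equals the `2*i < n` part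
  have hrefl : (∑ i ∈ (Finset.range (n+1)).filter (fun i => n < 2*i), f i)
      = ∑ i ∈ (Finset.range (n+1)).filter (fun i => 2*i < n), f i := by
    apply Finset.sum_nbij' (fun i => n - i) (fun i => n - i)
    · intro a ha; simp only [Finset.mem_filter, Finset.mem_range] at *; omega
    · intro a ha; simp only [Finset.mem_filter, Finset.mem_range] at *; omega
    · intro a ha; simp only [Finset.mem_filter, Finset.mem_range] at ha; omega
    · intro a ha; simp only [Finset.mem_filter, Finset.mem_range] at ha; omega
    · intro a ha
      simp only [Finset.mem_filter, Finset.mem_range] at ha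
      rw [hf]
      simp only
      rw [Nat.choose_symm (by omega)]
      congr 1
      have : ((((n : ℤ) - 2*(n - a : ℕ) : ℤ)) : ℝ) * θ = -(((((n : ℤ) - 2*a : ℤ)) : ℝ) * θ) := by
        push_cast [Nat.cast_sub (by omega : a ≤ n)]
        ring
      rw [this, Real.cos_neg]
  -- middle part equals the j = 0 term
  have hmid : (∑ i ∈ (Finset.range (n+1)).filter (fun i => 2*i = n), f i)
      = chebCoeff n 0 * Real.cos ((0 : ℕ) * θ) := by
    by_cases hev : Even n
    · obtain ⟨m, hm⟩ := hev
      have : (Finset.range (n+1)).filter (fun i => 2*i = n) = {m} := by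
        ext i; simp only [Finset.mem_filter, Finset.mem_range, Finset.mem_singleton]; omega
      rw [this, Finset.sum_singleton, hf]
      simp only [chebCoeff, if_pos rfl]
      rw [if_pos (show Even n from ⟨m, hm⟩)]
      have h1 : n / 2 = m := by omega
      have h2 : ((((n : ℤ) - 2*m : ℤ)) : ℝ) * θ = 0 := by
        have : (n : ℤ) - 2*m = 0 := by omega
        rw [this]; norm_num
      rw [h1, h2, Real.cos_zero]
      norm_num
    · have h1 : (Finset.range (n+1)).filter (fun i => 2*i = n) = ∅ := by
        ext i; simp only [Finset.mem_filter, Finset.mem_range, Finset.notMem_empty,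
          iff_false, not_and]
        intro _ h; exact hev ⟨i, by omega⟩
      rw [h1, Finset.sum_empty]
      simp [chebCoeff, hev]
  -- RHS: peel off j = 0, restrict to even n - j, and reindex
  have hpos : (∑ i ∈ Finset.range n, chebCoeff n (i+1) * Real.cos ((i+1 : ℕ) * θ))
      = 2 * ∑ i ∈ (Finset.range (n+1)).filter (fun i => 2*i < n), f i := by
    rw [← Finset.sum_filter_of_ne (p := fun i => Even (n - (i+1)))]
    · rw [Finset.mul_sum]
      apply Finset.sum_nbij' (fun i => (n - (i+1)) / 2) (fun k => n - 2*k - 1)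
      · intro a ha
        simp only [Finset.mem_filter, Finset.mem_range] at *
        obtain ⟨ha1, m, hm⟩ := ha
        omega
      · intro a ha; simp only [Finset.mem_filter, Finset.mem_range] at *
        constructor; · omega
        · exact ⟨a, by omega⟩
      · intro a ha; simp only [Finset.mem_filter, Finset.mem_range] at ha
        obtain ⟨ha1, m, hm⟩ := ha; omega
      · intro a ha; simp only [Finset.mem_filter, Finset.mem_range] at ha; omega
      · intro a ha
        simp only [Finset.mem_filter, Finset.mem_range] at ha
        obtain ⟨ha1, m, hm⟩ := ha
        rw [hf]
        simp only [chebCoeff]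
        rw [if_neg (by omega), if_pos ⟨by omega, ⟨m, hm⟩⟩]
        have hk : n - (a+1) = 2 * m := by omega
        have h1 : (n - (a+1)) / 2 = m := by omega
        have h3 : ((((n : ℤ) - 2*((n - (a+1))/2 : ℕ) : ℤ)) : ℝ) * θ = ((a+1 : ℕ) : ℝ) * θ := by
          have hn' : (n : ℤ) - 2*(((n - (a+1))/2 : ℕ) : ℤ) = ((a+1 : ℕ) : ℤ) := by
            rw [h1]; omega
          rw [hn']; push_cast; ring
        rw [h3, h1]
        have h4 : (2:ℝ)^n = 2 * 2^(n-1) := by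
          rw [← pow_succ']; congr 1; omega
        rw [h4]
        field_simp
    · intro i _ hne
      by_contra hodd
      apply hne
      simp only [chebCoeff, if_neg (Nat.succ_ne_zero i)]
      rw [if_neg]
      · ring
      · rintro ⟨-, hev⟩; exact hodd hev
  rw [hsplit, hrefl, hmid,
    Finset.sum_range_succ' (fun j => chebCoeff n j * Real.cos ((j : ℝ) * θ)) n, hpos]
  push_cast
  ring

lemma chebCoeff_nonneg (n k : ℕ) : 0 ≤ chebCoeff n k := by
  unfold chebCoeff
  split_ifs <;> positivity

lemma chebCoeff_eq_zero_of_gt (n k : ℕ) (h : n < k) : chebCoeff n k = 0 := by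
  unfold chebCoeff
  rw [if_neg (by omega), if_neg (by rintro ⟨h1, -⟩; omega)]

-- Chernoff-type tail bound
lemma tail_bound (n d M : ℕ) (hn : 0 < n) (hd0 : 0 < d) :
    ∑ j ∈ Finset.Ioc d M, chebCoeff n j ≤ 2 * Real.exp (-(d:ℝ)^2 / (2*n)) := by
  classical
  set t : ℝ := 2*d/n with ht
  have htpos : 0 ≤ t := by positivity
  set g : ℕ → ℝ := fun i => 2 * (n.choose i : ℝ) / 2^n * Real.exp (t * (((n:ℝ) - 2*i) - d) / 2)
    with hg
  have hgnonneg : ∀ i, 0 ≤ g i := by intro i; rw [hg]; positivity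
  -- step 1: the tail is at most the sum of g over range (n+1)
  have step1 : ∑ j ∈ Finset.Ioc d M, chebCoeff n j ≤ ∑ i ∈ Finset.range (n+1), g i := by
    rw [← Finset.sum_filter_of_ne (p := fun j => j ≤ n ∧ Even (n - j))
      (fun j hj hne => by
        by_contra hc
        apply hne
        unfold chebCoeff
        rw [Finset.mem_Ioc] at hj
        rw [if_neg (by omega), if_neg hc])]
    set S : Finset ℕ := (Finset.Ioc d M).filter (fun j => j ≤ n ∧ Even (n - j)) with hSdef
    have key : ∑ j ∈ S, chebCoeff n j = ∑ i ∈ S.image (fun j => (n - j)/2),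
        2 * (n.choose i : ℝ) / 2^n := by
      rw [Finset.sum_image]
      · apply Finset.sum_congr rfl
        intro j hj
        simp only [hSdef, Finset.mem_filter, Finset.mem_Ioc] at hj
        obtain ⟨⟨hdj, hjM⟩, hjn, hev⟩ := hj
        unfold chebCoeff
        rw [if_neg (by omega), if_pos ⟨hjn, hev⟩]
        have h4 : (2:ℝ)^n = 2 * 2^(n-1) := by
          rw [← pow_succ']; congr 1; omega
        rw [h4]
        field_simp
      · intro a ha b hb hab
        simp only [hSdef, Finset.mem_coe, Finset.mem_filter, Finset.mem_Ioc] at ha hb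
        obtain ⟨⟨-,-⟩, han, ma, hma⟩ := ha
        obtain ⟨⟨-,-⟩, hbn, mb, hmb⟩ := hb
        simp only at hab
        omega
    rw [key]
    calc ∑ i ∈ S.image (fun j => (n - j)/2), 2 * (n.choose i : ℝ) / 2^n
        ≤ ∑ i ∈ S.image (fun j => (n - j)/2), g i := by
          apply Finset.sum_le_sum
          intro i hi
          rw [Finset.mem_image] at hi
          obtain ⟨j, hj, rfl⟩ := hi
          simp only [hSdef, Finset.mem_filter, Finset.mem_Ioc] at hj
          obtain ⟨⟨hdj, -⟩, hjn, m, hm⟩ := hj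
          have hexp : (0:ℝ) ≤ t * (((n:ℝ) - 2*((n-j)/2 : ℕ)) - d) / 2 := by
            have h1 : ((n:ℝ) - 2*((n-j)/2 : ℕ)) = (j:ℝ) := by
              have : (n:ℤ) - 2*(((n-j)/2 : ℕ) : ℤ) = (j : ℤ) := by omega
              exact_mod_cast congrArg (fun z : ℤ => (z:ℝ)) this
            rw [h1]
            have : (d:ℝ) ≤ (j:ℝ) := by exact_mod_cast hdj.le
            have h2 : (0:ℝ) ≤ (j:ℝ) - d := by linarith
            positivity
          have h1 : g ((n-j)/2) = 2 * (n.choose ((n-j)/2) : ℝ)/2^n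
              * Real.exp (t * (((n:ℝ) - 2*((n-j)/2 : ℕ)) - d) / 2) := rfl
          rw [h1]
          exact le_mul_of_one_le_right (by positivity) (Real.one_le_exp hexp)
      _ ≤ ∑ i ∈ Finset.range (n+1), g i := by
          apply Finset.sum_le_sum_of_subset_of_nonneg
          · intro i hi
            rw [Finset.mem_image] at hi
            obtain ⟨j, hj, rfl⟩ := hi
            rw [Finset.mem_range]
            omega
          · intro i _ _; exact hgnonneg i
  -- step 2: compute the Chernoff sum
  have step2 : ∑ i ∈ Finset.range (n+1), g i
      = 2 * Real.exp (-(t*d)/2) * Real.cosh (t/2) ^ n := by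
    have hexpand : Real.cosh (t/2) ^ n
        = ∑ i ∈ Finset.range (n+1),
          (Real.exp (-(t/2)))^i * (Real.exp (t/2))^(n-i) * (n.choose i) / 2^n := by
      rw [Real.cosh_eq, add_comm, div_pow, Commute.add_pow (Commute.all _ _)]
      rw [Finset.sum_div]
    rw [hexpand, Finset.mul_sum]
    apply Finset.sum_congr rfl
    intro i hi
    rw [Finset.mem_range] at hi
    rw [hg]
    simp only
    rw [← Real.exp_nat_mul, ← Real.exp_nat_mul, ← Real.exp_add]
    have hmerge : Real.exp (-(t*(d:ℝ))/2)
        * Real.exp ((i:ℝ) * -(t/2) + ((n - i : ℕ):ℝ) * (t/2))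
        = Real.exp (t * (((n:ℝ) - 2*i) - d) / 2) := by
      rw [← Real.exp_add]
      congr 1
      rw [Nat.cast_sub (by omega : i ≤ n)]
      ring
    rw [← hmerge]
    ring
  -- step 3: bound cosh and conclude
  have hcosh : Real.cosh (t/2) ^ n ≤ Real.exp ((t/2)^2/2) ^ n := by
    apply pow_le_pow_left₀ (Real.cosh_pos _).le (Real.cosh_le_exp_half_sq _)
  have hn' : (0:ℝ) < n := by exact_mod_cast hn
  calc ∑ j ∈ Finset.Ioc d M, chebCoeff n j
      ≤ 2 * Real.exp (-(t*d)/2) * Real.cosh (t/2) ^ n := by rw [← step2]; exact step1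
    _ ≤ 2 * Real.exp (-(t*d)/2) * Real.exp ((t/2)^2/2) ^ n := by
        apply mul_le_mul_of_nonneg_left hcosh (by positivity)
    _ = 2 * Real.exp (-(t*d)/2 + n * ((t/2)^2/2)) := by
        rw [← Real.exp_nat_mul, mul_assoc, ← Real.exp_add]
    _ = 2 * Real.exp (-(d:ℝ)^2 / (2*n)) := by
        congr 1
        rw [ht]
        field_simp
        ring

/-- If `d ≥ ⌈√(2 n ln (2/δ))⌉` then `p_{n,d}` is a uniform `δ`-approximation of `x ^ n`
on `[-1, 1]`. -/
theorem monomial_chebyshev_delta_approx (n d : ℕ) (hn : 0 < n) (hd0 : 0 < d)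
    (δ : ℝ) (hδ : 0 < δ)
    (hd : ⌈Real.sqrt (2 * n * Real.log (2 / δ))⌉₊ ≤ d) :
    ∀ x ∈ Set.Icc (-1 : ℝ) 1, |x ^ n - chebTrunc n d x| ≤ δ := by
  intro x hx
  obtain ⟨hx1, hx2⟩ := hx
  set θ : ℝ := Real.arccos x with hθ
  have hcx : Real.cos θ = x := Real.cos_arccos hx1 hx2
  set M : ℕ := max n d with hM
  -- expansion of x ^ n over range (M+1)
  have h_exp : x ^ n = ∑ j ∈ Finset.range (M+1), chebCoeff n j * Real.cos (j * θ) := by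
    rw [← hcx, real_cos_pow, regroup]
    apply Finset.sum_subset (Finset.range_subset_range.2 (by omega))
    intro j hj hj'
    rw [Finset.mem_range] at hj hj'
    rw [chebCoeff_eq_zero_of_gt n j (by omega), zero_mul]
  -- truncation in terms of cosines
  have h_tr : chebTrunc n d x = ∑ j ∈ Finset.range (d+1), chebCoeff n j * Real.cos (j * θ) := by
    unfold chebTrunc
    apply Finset.sum_congr rfl
    intro j _
    congr 1
    rw [← hcx, Polynomial.Chebyshev.T_real_cos]
    norm_cast
  have hsub : Finset.range (d+1) ⊆ Finset.range (M+1) := Finset.range_subset_range.2 (by omega)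
  have hset : Finset.range (M+1) \ Finset.range (d+1) = Finset.Ioc d M := by
    ext j
    simp only [Finset.mem_sdiff, Finset.mem_range, Finset.mem_Ioc]
    omega
  have hdiff : x ^ n - chebTrunc n d x
      = ∑ j ∈ Finset.Ioc d M, chebCoeff n j * Real.cos (j * θ) := by
    rw [h_exp, h_tr, ← hset, Finset.sum_sdiff_eq_sub hsub]
  rw [hdiff]
  have hb1 : |∑ j ∈ Finset.Ioc d M, chebCoeff n j * Real.cos (j * θ)|
      ≤ ∑ j ∈ Finset.Ioc d M, chebCoeff n j := by
    refine le_trans (Finset.abs_sum_le_sum_abs _ _) (Finset.sum_le_sum fun j _ => ?_)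
    rw [abs_mul, abs_of_nonneg (chebCoeff_nonneg n j)]
    calc chebCoeff n j * |Real.cos (j * θ)| ≤ chebCoeff n j * 1 :=
          mul_le_mul_of_nonneg_left (Real.abs_cos_le_one _) (chebCoeff_nonneg n j)
      _ = chebCoeff n j := mul_one _
  have hb2 := tail_bound n d M hn hd0
  -- final arithmetic
  have hsq : Real.sqrt (2 * n * Real.log (2 / δ)) ≤ (d : ℝ) := Nat.ceil_le.mp hd
  have hn' : (0:ℝ) < n := by exact_mod_cast hn
  have hfin : 2 * Real.exp (-(d:ℝ)^2 / (2*n)) ≤ δ := by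
    by_cases hL : 0 ≤ 2 * (n:ℝ) * Real.log (2 / δ)
    · have h1 : 2 * (n:ℝ) * Real.log (2 / δ) ≤ (d:ℝ)^2 := by
        have := Real.sq_sqrt hL
        calc 2 * (n:ℝ) * Real.log (2 / δ)
            = Real.sqrt (2 * n * Real.log (2 / δ)) ^ 2 := this.symm
          _ ≤ (d:ℝ)^2 := by
              apply pow_le_pow_left₀ (Real.sqrt_nonneg _) hsq
      have h2 : -(d:ℝ)^2 / (2*n) ≤ -Real.log (2 / δ) := by
        rw [div_le_iff₀ (by positivity)]
        nlinarith
      have h3 : Real.exp (-(d:ℝ)^2 / (2*n)) ≤ δ / 2 := by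
        calc Real.exp (-(d:ℝ)^2 / (2*n)) ≤ Real.exp (-Real.log (2 / δ)) :=
              Real.exp_le_exp.mpr h2
          _ = δ / 2 := by
              rw [Real.exp_neg, Real.exp_log (by positivity)]
              rw [inv_div]
      linarith
    · have hlog : Real.log (2 / δ) < 0 := by nlinarith
      have h2δ : 2 < δ := by
        have := (Real.log_neg_iff (by positivity)).mp hlog
        rw [div_lt_one hδ] at this
        exact this
      have : Real.exp (-(d:ℝ)^2 / (2*n)) ≤ 1 := by
        rw [Real.exp_le_one_iff, neg_div]
        have : (0:ℝ) ≤ (d:ℝ)^2 / (2*n) := by positivity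
        exact neg_nonpos.mpr this
      linarith
  linarith
end

section
/- The tail of the Chebyshev expansion of x^n is controlled by the random walk tail: sum_{j=d+1}^{n} c_{n,j} ≤ P(|Z_n| > d) ≤ 2 exp(-d²/(2n)), where Z_n is a sum of n i.i.d. Rademacher random variables. -/
open Finset
open scoped Classical

lemma radWalk_eq {n : ℕ} (ε : Fin n → Bool) :
    radWalk ε = 2 * ((univ.filter fun i => ε i).card : ℤ) - n := by
  unfold radWalk
  have h : ∀ i : Fin n, (if ε i then (1:ℤ) else -1) = 2 * (if ε i then 1 else 0) - 1 := by
    intro i; split <;> ring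
  simp_rw [h]
  rw [Finset.sum_sub_distrib, ← Finset.mul_sum, Finset.sum_boole]
  simp

lemma card_trueCount (n k : ℕ) :
    ((univ : Finset (Fin n → Bool)).filter fun ε => (univ.filter fun i => ε i).card = k).card
      = n.choose k := by
  have h0 := Finset.card_powersetCard k (univ : Finset (Fin n))
  rw [Finset.card_univ, Fintype.card_fin] at h0
  rw [← h0]
  apply Finset.card_nbij' (fun ε => univ.filter fun i => ε i) (fun s => fun i => decide (i ∈ s))
  · intro ε hε
    simp only [Finset.mem_coe, Finset.mem_filter, Finset.mem_univ, true_and] at hε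
    simp [Finset.mem_powersetCard, hε]
  · intro s hs
    simp only [Finset.mem_coe, Finset.mem_powersetCard] at hs
    simp only [Finset.mem_coe, Finset.mem_filter, Finset.mem_univ, true_and]
    rw [← hs.2]; congr 1; ext i; simp
  · intro ε hε; funext i; simp
  · intro s hs; ext i; simp

lemma card_radWalk_eq {n : ℕ} (k : ℕ) (hk : k ≤ n) :
    ((univ : Finset (Fin n → Bool)).filter fun ε => radWalk ε = 2 * (k : ℤ) - n).card
      = n.choose k := by
  rw [← card_trueCount n k]
  congr 1; apply Finset.filter_congr
  intro ε _
  rw [radWalk_eq]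
  constructor
  · intro h; exact_mod_cast (by omega : ((univ.filter fun i => ε i).card : ℤ) = k)
  · intro h; rw [h]

lemma abs_radWalk_le {n : ℕ} (ε : Fin n → Bool) : |radWalk ε| ≤ n := by
  unfold radWalk
  calc |∑ i : Fin n, (if ε i then (1:ℤ) else -1)| ≤ ∑ i : Fin n, |if ε i then (1:ℤ) else -1| :=
        Finset.abs_sum_le_sum_abs _ _
    _ ≤ ∑ _i : Fin n, 1 := by apply Finset.sum_le_sum; intro i _; split <;> simp
    _ = n := by simp

lemma card_abs_radWalk {n j : ℕ} (hj1 : 1 ≤ j) (hjn : j ≤ n) (hev : Even (n - j)) :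
    ((univ : Finset (Fin n → Bool)).filter fun ε => |radWalk ε| = (j : ℤ)).card
      = 2 * n.choose ((n - j) / 2) := by
  have h2 : 2 * ((n - j) / 2) = n - j := Nat.two_mul_div_two_of_even hev
  have hev' : Even (n + j) := by
    rcases hev with ⟨m, hm⟩; exact ⟨m + j, by omega⟩
  have h2' : 2 * ((n + j) / 2) = n + j := Nat.two_mul_div_two_of_even hev'
  have hsplit : ((univ : Finset (Fin n → Bool)).filter fun ε => |radWalk ε| = (j : ℤ))
      = ((univ : Finset (Fin n → Bool)).filter fun ε => radWalk ε = (j : ℤ))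
        ∪ ((univ : Finset (Fin n → Bool)).filter fun ε => radWalk ε = -(j : ℤ)) := by
    rw [← Finset.filter_or]
    apply Finset.filter_congr
    intro ε _
    rw [abs_eq (by positivity)]
  rw [hsplit, Finset.card_union_of_disjoint]
  · have e1 : ((univ : Finset (Fin n → Bool)).filter fun ε => radWalk ε = (j : ℤ)).card
        = n.choose ((n + j) / 2) := by
      rw [← card_radWalk_eq ((n + j) / 2) (by omega)]
      congr 1; apply Finset.filter_congr; intro ε _
      have : 2 * (((n + j) / 2 : ℕ) : ℤ) - n = (j : ℤ) := by push_cast; omega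
      rw [this]
    have e2 : ((univ : Finset (Fin n → Bool)).filter fun ε => radWalk ε = -(j : ℤ)).card
        = n.choose ((n - j) / 2) := by
      rw [← card_radWalk_eq ((n - j) / 2) (by omega)]
      congr 1; apply Finset.filter_congr; intro ε _
      have : 2 * (((n - j) / 2 : ℕ) : ℤ) - n = -(j : ℤ) := by push_cast; omega
      rw [this]
    rw [e1, e2]
    have : (n + j) / 2 = n - (n - j) / 2 := by omega
    rw [this, Nat.choose_symm (by omega)]
    ring
  · rw [Finset.disjoint_left]
    intro ε h1 h2
    simp only [Finset.mem_filter] at h1 h2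
    omega

lemma card_tail_eq {n d : ℕ} :
    (((univ : Finset (Fin n → Bool)).filter fun ε => (d : ℤ) < |radWalk ε|).card : ℝ)
      = ∑ j ∈ Finset.Icc (d + 1) n,
          (((univ : Finset (Fin n → Bool)).filter fun ε => |radWalk ε| = (j : ℤ)).card : ℝ) := by
  have := Finset.card_eq_sum_card_fiberwise
    (s := (univ : Finset (Fin n → Bool)).filter fun ε => (d : ℤ) < |radWalk ε|)
    (t := Finset.Icc (d + 1) n) (f := fun ε => (|radWalk ε|).toNat) ?_
  · rw [this]; push_cast
    apply Finset.sum_congr rfl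
    intro j hj
    simp only [Finset.mem_Icc] at hj
    congr 1
    rw [Finset.filter_filter]
    congr 1
    apply Finset.filter_congr
    intro ε _
    have habs : (0:ℤ) ≤ |radWalk ε| := abs_nonneg _
    constructor
    · intro ⟨_, h2⟩; omega
    · intro h; exact ⟨by omega, by omega⟩
  · intro ε hε
    simp only [Finset.mem_coe, Finset.mem_filter, Finset.mem_univ, true_and] at hε
    have := abs_radWalk_le ε
    simp only [Finset.mem_coe, Finset.mem_Icc]
    omega

lemma part1 (n d : ℕ) (hn : 0 < n) :
    (∑ j ∈ Finset.Icc (d + 1) n, chebCoeff n j) ≤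
      (((univ : Finset (Fin n → Bool)).filter fun ε => (d : ℤ) < |radWalk ε|).card : ℝ) / 2 ^ n := by
  rw [card_tail_eq, Finset.sum_div]
  apply Finset.sum_le_sum
  intro j hj
  simp only [Finset.mem_Icc] at hj
  unfold chebCoeff
  rw [if_neg (by omega)]
  split
  · rename_i h
    rw [card_abs_radWalk (by omega) hj.2 h.2]
    push_cast
    have hpow : (2:ℝ) ^ n = 2 * 2 ^ (n - 1) := by
      rw [← pow_succ']; congr 1; omega
    exact le_of_eq ((by rw [hpow, mul_div_mul_left _ _ two_ne_zero] : 
      (2:ℝ) * (n.choose ((n - j) / 2)) / 2 ^ n = (n.choose ((n - j) / 2)) / 2 ^ (n - 1))).symm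
  · positivity

set_option maxHeartbeats 1000000 in
lemma mgf_eq {n : ℕ} (t : ℝ) :
    ∑ ε : Fin n → Bool, Real.exp (t * (radWalk ε : ℝ))
      = (Real.exp t + Real.exp (-t)) ^ n := by
  have h : ∀ ε : Fin n → Bool, Real.exp (t * (radWalk ε : ℝ))
      = ∏ i : Fin n, Real.exp (t * (if ε i then (1:ℝ) else -1)) := by
    intro ε
    rw [← Real.exp_sum]
    congr 1
    unfold radWalk
    push_cast
    rw [Finset.mul_sum]
  calc ∑ ε : Fin n → Bool, Real.exp (t * (radWalk ε : ℝ))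
      = ∑ ε : Fin n → Bool, ∏ i : Fin n, Real.exp (t * (if ε i then (1:ℝ) else -1)) :=
        Finset.sum_congr rfl fun ε _ => h ε
    _ = ∏ i : Fin n, ∑ b : Bool, Real.exp (t * (if b then (1:ℝ) else -1)) :=
        (Fintype.prod_sum fun (_ : Fin n) (b : Bool) =>
          Real.exp (t * (if b then (1:ℝ) else -1))).symm
    _ = (Real.exp t + Real.exp (-t)) ^ n := by
        simp [Fintype.sum_bool, mul_comm]

lemma part2 (n d : ℕ) (hn : 0 < n) (hd : 0 < d) :
    ((univ.filter fun ε : Fin n → Bool => (d : ℤ) < |radWalk ε|).card : ℝ) / 2 ^ n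
      ≤ 2 * Real.exp (-(d : ℝ) ^ 2 / (2 * n)) := by
  set t : ℝ := d / n with ht
  have hn' : (0:ℝ) < n := by exact_mod_cast hn
  have htpos : 0 < t := by positivity
  set S := univ.filter fun ε : Fin n → Bool => (d : ℤ) < |radWalk ε| with hS
  have key : (S.card : ℝ) * Real.exp (t * d) ≤ 2 * (Real.exp t + Real.exp (-t)) ^ n := by
    have h1 : (S.card : ℝ) * Real.exp (t * d) = ∑ _ε ∈ S, Real.exp (t * d) := by
      rw [Finset.sum_const, nsmul_eq_mul]
    rw [h1]
    have h2 : ∑ ε ∈ S, Real.exp (t * d)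
        ≤ ∑ ε ∈ S, (Real.exp (t * (radWalk ε : ℝ)) + Real.exp (-t * (radWalk ε : ℝ))) := by
      apply Finset.sum_le_sum
      intro ε hε
      simp only [hS, Finset.mem_filter, Finset.mem_univ, true_and] at hε
      have hd' : (d : ℝ) ≤ |(radWalk ε : ℝ)| := by
        rw [← Int.cast_abs]; exact_mod_cast hε.le
      have hstep : Real.exp (t * d) ≤ Real.exp (t * |(radWalk ε : ℝ)|) :=
        Real.exp_le_exp.2 (mul_le_mul_of_nonneg_left hd' htpos.le)
      refine hstep.trans ?_
      rcases abs_choice ((radWalk ε : ℝ)) with habs | habs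
      · rw [habs]
        have := Real.exp_pos (-t * (radWalk ε : ℝ))
        linarith
      · rw [habs, show t * -(radWalk ε : ℝ) = -t * (radWalk ε : ℝ) by ring]
        have := Real.exp_pos (t * (radWalk ε : ℝ))
        linarith
    refine h2.trans ?_
    have h3 : ∑ ε ∈ S, (Real.exp (t * (radWalk ε : ℝ)) + Real.exp (-t * (radWalk ε : ℝ)))
        ≤ ∑ ε : Fin n → Bool, (Real.exp (t * (radWalk ε : ℝ)) + Real.exp (-t * (radWalk ε : ℝ))) :=
      Finset.sum_le_sum_of_subset_of_nonneg (Finset.filter_subset _ _)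
        (fun ε _ _ => by positivity)
    refine h3.trans ?_
    rw [Finset.sum_add_distrib, mgf_eq]
    have hneg := mgf_eq (n := n) (-t)
    rw [neg_neg, add_comm (Real.exp (-t)) (Real.exp t)] at hneg
    rw [hneg]
    linarith
  have hE : Real.exp t + Real.exp (-t) = 2 * Real.cosh t := by rw [Real.cosh_eq]; ring
  have hcosh : Real.cosh t ^ n ≤ Real.exp (t ^ 2 / 2) ^ n :=
    pow_le_pow_left₀ (le_of_lt (Real.cosh_pos t)) (Real.cosh_le_exp_half_sq t) n
  have hexp : Real.exp (-(d:ℝ) ^ 2 / (2 * n)) * Real.exp (t * d) = Real.exp ((t ^ 2 / 2) * n) := by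
    rw [← Real.exp_add]; congr 1; rw [ht]; field_simp; ring
  rw [div_le_iff₀ (by positivity)]
  have key2 : (S.card : ℝ) ≤ 2 * (Real.exp t + Real.exp (-t)) ^ n / Real.exp (t * d) := by
    rw [le_div_iff₀ (Real.exp_pos _)]; exact key
  refine key2.trans ?_
  rw [div_le_iff₀ (Real.exp_pos _), hE, mul_pow]
  calc 2 * ((2:ℝ) ^ n * Real.cosh t ^ n) ≤ 2 * (2 ^ n * Real.exp (t ^ 2 / 2) ^ n) := by
        have h2n : (0:ℝ) ≤ 2 ^ n := by positivity
        nlinarith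
    _ = 2 * Real.exp (-(d:ℝ) ^ 2 / (2 * n)) * 2 ^ n * Real.exp (t * d) := by
        rw [← Real.exp_nat_mul, mul_comm (n:ℝ) (t ^ 2 / 2), ← hexp]; ring

/-- The tail of the Chebyshev expansion of `x ^ n` is controlled by the random-walk tail:
`∑_{j=d+1}^{n} c_{n,j} ≤ P(|Z_n| > d) ≤ 2 exp (-d² / (2n))`, where the probability is a
uniform average over the `2 ^ n` equally likely sign sequences. -/
theorem chebCoeff_tail_le_walk_tail (n d : ℕ) (hn : 0 < n) (hd : 0 < d) :
    (∑ j ∈ Finset.Icc (d + 1) n, chebCoeff n j) ≤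
        ((Finset.univ.filter fun ε : Fin n → Bool => (d : ℤ) < |radWalk ε|).card : ℝ)
          / 2 ^ n ∧
      ((Finset.univ.filter fun ε : Fin n → Bool => (d : ℤ) < |radWalk ε|).card : ℝ)
          / 2 ^ n ≤ 2 * Real.exp (-(d : ℝ) ^ 2 / (2 * n)) := by
  exact ⟨part1 n d hn, part2 n d hn hd⟩
end

section
/- Let γ ≥ 0 and δ in (0,1/2]. With t_γ = O(γ² + ln(1/δ)) and d = O(sqrt(t_γ ln(1/δ))) chosen as t_γ = ceil(max(γ²e²/2, ln(2/δ))) and d = ceil(sqrt(2 t_γ ln(4/δ))), the polynomial e^{-γ²/2} sum_{k=0}^{t_γ} ((-γ²/2)^k / k!) sum_{j=0}^{d} c_{k,j} T_{2j}(x), of degree 2d, satisfies sup_{x in [-1,1]} |e^{-(γx)²} - (that polynomial)| ≤ δ. -/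
open Finset

lemma chebCoeff_zero_right (n : ℕ) :
    chebCoeff n 0 = if Even n then (n.choose (n / 2) : ℝ) / 2 ^ n else 0 := if_pos rfl

lemma chebCoeff_of_ne {j : ℕ} (n : ℕ) (h : j ≠ 0) :
    chebCoeff n j
      = if j ≤ n ∧ Even (n - j) then (n.choose ((n - j) / 2) : ℝ) / 2 ^ (n - 1) else 0 :=
  if_neg h

lemma chebCoeff_eq_zero {n j : ℕ} (h : n < j) : chebCoeff n j = 0 := by
  rw [chebCoeff_of_ne n (by omega)]
  exact if_neg (by rintro ⟨h1, -⟩; omega)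

lemma chebCoeff_succ_zero (k : ℕ) : chebCoeff (k + 1) 0 = chebCoeff k 1 / 2 := by
  rw [chebCoeff_zero_right, chebCoeff_of_ne k one_ne_zero]
  rcases Nat.mod_two_eq_zero_or_one k with hk | hk
  · rw [if_neg (by simp only [Nat.even_iff]; omega),
      if_neg (by rintro ⟨h1, h2⟩; simp only [Nat.even_iff] at h2; omega)]
    norm_num
  · rw [if_pos (by simp only [Nat.even_iff]; omega),
      if_pos ⟨by omega, by simp only [Nat.even_iff]; omega⟩]
    set a := (k - 1) / 2 with ha
    have hk' : k = 2 * a + 1 := by omega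
    have hsymm : k.choose (a + 1) = k.choose a := by
      have h := Nat.choose_symm (show a + 1 ≤ k by omega)
      rw [show k - (a + 1) = a by omega] at h
      exact h.symm
    have pascal : (k + 1).choose (a + 1) = 2 * k.choose a := by
      have h := Nat.choose_succ_succ k a
      simp only [Nat.succ_eq_add_one] at h
      omega
    rw [show (k + 1) / 2 = a + 1 by omega, pascal]
    have hp : (2:ℝ) ^ (k + 1) = 2 ^ (k - 1) * 4 := by
      rw [show (4:ℝ) = 2 ^ 2 by norm_num, ← pow_add]; congr 1; omega
    rw [hp]; push_cast; ring

lemma chebCoeff_succ_one (k : ℕ) :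
    chebCoeff (k + 1) 1 = chebCoeff k 0 + chebCoeff k 2 / 2 := by
  rw [chebCoeff_zero_right, chebCoeff_of_ne (k + 1) one_ne_zero,
    chebCoeff_of_ne k two_ne_zero]
  rcases Nat.mod_two_eq_zero_or_one k with hk | hk
  · rcases Nat.eq_zero_or_pos k with hk0 | hkpos
    · subst hk0; norm_num [chebCoeff]
    · rw [if_pos ⟨by omega, by simp only [Nat.even_iff]; omega⟩,
        if_pos (by simp only [Nat.even_iff]; omega),
        if_pos ⟨by omega, by simp only [Nat.even_iff]; omega⟩]
      set a := k / 2 with ha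
      have hk' : k = 2 * a := by omega
      have ha1 : 1 ≤ a := by omega
      have pascal : (k + 1).choose a = k.choose a + k.choose (a - 1) := by
        have h := Nat.choose_succ_succ k (a - 1)
        simp only [Nat.succ_eq_add_one] at h
        rw [show a - 1 + 1 = a by omega] at h
        omega
      rw [show k + 1 - 1 = k by omega, show (k - 2) / 2 = a - 1 by omega, pascal]
      have hp : (2:ℝ) ^ k = 2 ^ (k - 1) * 2 := by
        rw [← pow_succ]; congr 1; omega
      rw [hp]; push_cast; ring
  · rw [if_neg (by rintro ⟨h1, h2⟩; simp only [Nat.even_iff] at h2; omega),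
      if_neg (by simp only [Nat.even_iff]; omega),
      if_neg (by rintro ⟨h1, h2⟩; simp only [Nat.even_iff] at h2; omega)]
    norm_num

lemma chebCoeff_succ_ge_two (k m : ℕ) :
    chebCoeff (k + 1) (m + 2) = chebCoeff k (m + 1) / 2 + chebCoeff k (m + 3) / 2 := by
  rw [chebCoeff_of_ne (k + 1) (by omega), chebCoeff_of_ne k (by omega),
    chebCoeff_of_ne k (by omega)]
  by_cases hle : m + 2 ≤ k + 1
  · by_cases hev : (k + 1 - (m + 2)) % 2 = 0
    · rw [if_pos ⟨hle, by simp only [Nat.even_iff]; omega⟩,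
        if_pos ⟨by omega, by simp only [Nat.even_iff]; omega⟩]
      set a := (k + 1 - (m + 2)) / 2 with ha
      rw [show k - (m + 1) = 2 * a by omega,
        show (2 * a) / 2 = a by omega, show k + 1 - 1 = k by omega]
      by_cases hle2 : m + 3 ≤ k
      · rw [if_pos ⟨hle2, by simp only [Nat.even_iff]; omega⟩]
        have ha1 : 1 ≤ a := by omega
        rw [show k - (m + 3) = 2 * (a - 1) by omega, show (2 * (a - 1)) / 2 = a - 1 by omega]
        have pascal : (k + 1).choose a = k.choose a + k.choose (a - 1) := by
          have h := Nat.choose_succ_succ k (a - 1)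
          simp only [Nat.succ_eq_add_one] at h
          rw [show a - 1 + 1 = a by omega] at h
          omega
        rw [pascal]
        have hp : (2:ℝ) ^ k = 2 ^ (k - 1) * 2 := by
          rw [← pow_succ]; congr 1; omega
        rw [hp]; push_cast; ring
      · -- then m + 2 = k + 1 (using parity to exclude m + 2 = k)
        have hmk : m + 2 = k + 1 := by omega
        rw [if_neg (by omega)]
        have ha0 : a = 0 := by omega
        rw [ha0, Nat.choose_zero_right, Nat.choose_zero_right]
        have hk1 : 1 ≤ k := by omega
        have hp : (2:ℝ) ^ k = 2 ^ (k - 1) * 2 := by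
          rw [← pow_succ]; congr 1; omega
        rw [hp]; push_cast; ring
    · rw [if_neg (by rintro ⟨h1, h2⟩; simp only [Nat.even_iff] at h2; omega),
        if_neg (by rintro ⟨h1, h2⟩; simp only [Nat.even_iff] at h2; omega),
        if_neg (by rintro ⟨h1, h2⟩; simp only [Nat.even_iff] at h2; omega)]
      norm_num
  · rw [if_neg (by omega), if_neg (by rintro ⟨h1, -⟩; omega),
      if_neg (by rintro ⟨h1, -⟩; omega)]
    norm_num

lemma chebCoeff_rec (k m : ℕ) :
    chebCoeff (k + 1) m = (if m = 1 then chebCoeff k 0 / 2 else 0)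
      + (if 1 ≤ m then chebCoeff k (m - 1) / 2 else 0) + chebCoeff k (m + 1) / 2 := by
  match m with
  | 0 => simpa using chebCoeff_succ_zero k
  | 1 => simpa using chebCoeff_succ_one k
  | (m + 2) =>
    rw [if_neg (by omega), if_pos (by omega), show m + 2 - 1 = m + 1 from rfl,
      show m + 2 + 1 = m + 3 from rfl]
    simpa using chebCoeff_succ_ge_two k m

lemma cos_pow_eq (k : ℕ) (φ : ℝ) :
    Real.cos φ ^ k = ∑ j ∈ range (k + 1), chebCoeff k j * Real.cos (j * φ) := by
  induction k with
  | zero => simp [chebCoeff]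
  | succ k ih =>
    have step : ∀ j : ℕ, Real.cos φ * Real.cos (j * φ)
        = Real.cos ((j + 1 : ℕ) * φ) / 2 + Real.cos (((j : ℝ) - 1) * φ) / 2 := by
      intro j
      have h1 := Real.cos_add ((j : ℝ) * φ) φ
      have h2 := Real.cos_sub ((j : ℝ) * φ) φ
      have e1 : ((j : ℝ) * φ + φ) = ((j + 1 : ℕ) : ℝ) * φ := by push_cast; ring
      have e2 : ((j : ℝ) * φ - φ) = ((j : ℝ) - 1) * φ := by ring
      rw [e1] at h1
      rw [e2] at h2
      have := congrArg₂ (· + ·) h1 h2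
      linarith [this]
    have lhs_eq : Real.cos φ ^ (k + 1)
        = ∑ j ∈ range (k + 1), (chebCoeff k j / 2 * Real.cos ((j + 1 : ℕ) * φ)
            + chebCoeff k j / 2 * Real.cos (((j : ℝ) - 1) * φ)) := by
      rw [pow_succ, ih, mul_comm, Finset.mul_sum]
      refine Finset.sum_congr rfl fun j _ => ?_
      rw [mul_left_comm, step j]
      ring
    rw [lhs_eq, Finset.sum_add_distrib]
    -- rewrite the target sum using the recurrence
    have rhs_eq : ∑ j ∈ range (k + 2), chebCoeff (k + 1) j * Real.cos (j * φ)
        = (∑ j ∈ range (k + 2), (if j = 1 then chebCoeff k 0 / 2 else 0) * Real.cos (j * φ))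
          + (∑ j ∈ range (k + 2),
              (if 1 ≤ j then chebCoeff k (j - 1) / 2 else 0) * Real.cos (j * φ))
          + ∑ j ∈ range (k + 2), chebCoeff k (j + 1) / 2 * Real.cos (j * φ) := by
      rw [← Finset.sum_add_distrib, ← Finset.sum_add_distrib]
      refine Finset.sum_congr rfl fun j _ => ?_
      rw [chebCoeff_rec]
      ring
    rw [rhs_eq]
    have S1 : ∑ j ∈ range (k + 2), (if j = 1 then chebCoeff k 0 / 2 else 0) * Real.cos (j * φ)
        = chebCoeff k 0 / 2 * Real.cos φ := by
      rw [Finset.sum_eq_single 1]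
      · norm_num
      · intro b _ hb; rw [if_neg hb, zero_mul]
      · intro h; exact absurd (Finset.mem_range.mpr (by omega)) h
    have S2 : ∑ j ∈ range (k + 2), (if 1 ≤ j then chebCoeff k (j - 1) / 2 else 0)
          * Real.cos (j * φ)
        = ∑ j ∈ range (k + 1), chebCoeff k j / 2 * Real.cos ((j + 1 : ℕ) * φ) := by
      rw [Finset.sum_range_succ' (fun j => (if 1 ≤ j then chebCoeff k (j - 1) / 2 else 0)
          * Real.cos (j * φ)) (k + 1)]
      simp only [if_neg (by omega : ¬ 1 ≤ 0), zero_mul, add_zero]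
      refine Finset.sum_congr rfl fun j _ => ?_
      rw [if_pos (by omega : 1 ≤ j + 1)]
      norm_num
    have S3 : ∑ j ∈ range (k + 2), chebCoeff k (j + 1) / 2 * Real.cos (j * φ)
        = ∑ j ∈ range k, chebCoeff k (j + 1) / 2 * Real.cos (j * φ) := by
      rw [Finset.sum_range_succ, Finset.sum_range_succ,
        chebCoeff_eq_zero (show k < k + 1 + 1 by omega),
        chebCoeff_eq_zero (show k < k + 1 by omega)]
      norm_num
    have S4 : ∑ j ∈ range (k + 1), chebCoeff k j / 2 * Real.cos (((j : ℝ) - 1) * φ)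
        = chebCoeff k 0 / 2 * Real.cos φ
          + ∑ j ∈ range k, chebCoeff k (j + 1) / 2 * Real.cos (j * φ) := by
      rw [Finset.sum_range_succ' (fun j => chebCoeff k j / 2 * Real.cos (((j : ℝ) - 1) * φ)) k]
      rw [add_comm]
      congr 1
      · norm_num
      · refine Finset.sum_congr rfl fun j _ => ?_
        push_cast
        ring_nf
    rw [S1, S2, S3, S4]
    ring

lemma chebCoeff_tail_le (k d : ℕ) (hk : 0 < k) :
    ∑ j ∈ Ico (d + 1) (k + 1), chebCoeff k j ≤ 2 * Real.exp (-(d:ℝ)^2 / (2 * k)) := by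
  set s : ℝ := (d : ℝ) / k with hs
  have hs0 : 0 ≤ s := by positivity
  set g : ℕ → ℝ := fun i => (k.choose i : ℝ) * Real.exp (s * ((k:ℝ) - 2*i - d)) / 2^(k-1)
    with hg
  have hgnn : ∀ i, 0 ≤ g i := fun i => by rw [hg]; positivity
  have h1 : ∑ j ∈ Ico (d + 1) (k + 1), chebCoeff k j ≤ ∑ i ∈ range (k + 1), g i := by
    have e1 : ∑ j ∈ Ico (d + 1) (k + 1), chebCoeff k j
        = ∑ j ∈ (Ico (d + 1) (k + 1)).filter (fun j => Even (k - j)),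
            (k.choose ((k - j) / 2) : ℝ) / 2 ^ (k - 1) := by
      rw [Finset.sum_filter]
      refine Finset.sum_congr rfl fun j hj => ?_
      rw [Finset.mem_Ico] at hj
      rw [chebCoeff_of_ne k (by omega)]
      by_cases h : Even (k - j)
      · rw [if_pos h, if_pos ⟨by omega, h⟩]
      · rw [if_neg h, if_neg (by rintro ⟨-, h2⟩; exact h h2)]
    rw [e1]
    calc ∑ j ∈ (Ico (d + 1) (k + 1)).filter (fun j => Even (k - j)),
            (k.choose ((k - j) / 2) : ℝ) / 2 ^ (k - 1)
        ≤ ∑ j ∈ (Ico (d + 1) (k + 1)).filter (fun j => Even (k - j)), g ((k - j) / 2) := by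
          refine Finset.sum_le_sum fun j hj => ?_
          rw [Finset.mem_filter, Finset.mem_Ico] at hj
          obtain ⟨⟨hj1, hj2⟩, hj3⟩ := hj
          simp only [hg]
          have harg : (k:ℝ) - 2*((k - j) / 2 : ℕ) - d = (j : ℝ) - d := by
            have h2 : 2 * ((k - j) / 2) = k - j := by
              rw [Nat.even_iff] at hj3; omega
            have : ((2 * ((k - j) / 2) : ℕ) : ℝ) = ((k - j : ℕ) : ℝ) := by rw [h2]
            push_cast at this ⊢
            have hjk : (j:ℝ) ≤ k := by exact_mod_cast (by omega : j ≤ k)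
            have hkj : ((k - j : ℕ) : ℝ) = (k:ℝ) - j := by
              push_cast [Nat.cast_sub (by omega : j ≤ k)]; ring
            rw [hkj] at this
            linarith
          rw [harg]
          have hexp : (1:ℝ) ≤ Real.exp (s * ((j:ℝ) - d)) := by
            rw [← Real.exp_zero]
            apply Real.exp_le_exp.mpr
            have : (d:ℝ) + 1 ≤ j := by exact_mod_cast hj1
            have : (0:ℝ) ≤ (j:ℝ) - d := by linarith
            positivity
          have hc : (0:ℝ) ≤ (k.choose ((k - j) / 2) : ℝ) / 2 ^ (k - 1) := by positivity
          calc (k.choose ((k - j) / 2) : ℝ) / 2 ^ (k - 1)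
              = (k.choose ((k - j) / 2) : ℝ) / 2 ^ (k - 1) * 1 := by ring
            _ ≤ (k.choose ((k - j) / 2) : ℝ) / 2 ^ (k - 1) * Real.exp (s * ((j:ℝ) - d)) := by
                apply mul_le_mul_of_nonneg_left hexp hc
            _ = (k.choose ((k - j) / 2) : ℝ) * Real.exp (s * ((j:ℝ) - d)) / 2 ^ (k - 1) := by
                ring
      _ = ∑ i ∈ ((Ico (d + 1) (k + 1)).filter (fun j => Even (k - j))).image
              (fun j => (k - j) / 2), g i := by
          rw [Finset.sum_image]
          intro j1 h1 j2 h2 heq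
          rw [Finset.mem_coe, Finset.mem_filter, Finset.mem_Ico] at h1 h2
          rw [Nat.even_iff] at h1 h2
          simp only at heq
          omega
      _ ≤ ∑ i ∈ range (k + 1), g i := by
          apply Finset.sum_le_sum_of_subset_of_nonneg
          · intro i hi
            rw [Finset.mem_image] at hi
            obtain ⟨j, hj, rfl⟩ := hi
            rw [Finset.mem_range]
            omega
          · intro i _ _; exact hgnn i
  have h2 : ∑ i ∈ range (k + 1), g i
      = Real.exp (s * ((k:ℝ) - d)) * (Real.exp (-2*s) + 1) ^ k / 2 ^ (k - 1) := by
    rw [add_pow, Finset.mul_sum, Finset.sum_div]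
    refine Finset.sum_congr rfl fun i hi => ?_
    simp only [hg, one_pow, mul_one]
    rw [← Real.exp_nat_mul]
    rw [show Real.exp (s * ((k:ℝ) - d)) * (Real.exp ((i:ℝ) * (-2 * s)) * (k.choose i : ℝ))
        = (k.choose i : ℝ) * Real.exp (s * ((k:ℝ) - d) + (i:ℝ) * (-2 * s)) by
      rw [Real.exp_add]; ring]
    congr 2
    push_cast
    ring
  have h3 : Real.exp (-2*s) + 1 = 2 * Real.exp (-s) * Real.cosh s := by
    rw [Real.cosh_eq, show (-2:ℝ)*s = -s + -s by ring, Real.exp_add]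
    rw [Real.exp_neg]
    have h := Real.exp_ne_zero s
    field_simp
    ring
  have hp2 : (2:ℝ) ^ k = 2 ^ (k - 1) * 2 := by rw [← pow_succ]; congr 1; omega
  calc ∑ j ∈ Ico (d + 1) (k + 1), chebCoeff k j
      ≤ ∑ i ∈ range (k + 1), g i := h1
    _ = Real.exp (s * ((k:ℝ) - d)) * (2 * Real.exp (-s) * Real.cosh s) ^ k / 2 ^ (k - 1) := by
        rw [h2, h3]
    _ = 2 * (Real.exp (s * ((k:ℝ) - d)) * Real.exp (-s) ^ k * Real.cosh s ^ k) := by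
        rw [mul_pow, mul_pow, hp2]
        have : (0:ℝ) < 2 ^ (k - 1) := by positivity
        field_simp
    _ ≤ 2 * (Real.exp (s * ((k:ℝ) - d)) * Real.exp (-s) ^ k * Real.exp (s^2/2) ^ k) := by
        have hch := Real.cosh_le_exp_half_sq s
        gcongr
    _ = 2 * Real.exp (-(d:ℝ)^2 / (2 * k)) := by
        rw [← Real.exp_nat_mul, ← Real.exp_nat_mul, ← Real.exp_add, ← Real.exp_add]
        congr 1
        have hk' : (k:ℝ) ≠ 0 := by positivity
        rw [hs]
        field_simp
        ring

lemma nat_pow_le_exp_mul_factorial (n : ℕ) : (n:ℝ) ^ n ≤ Real.exp n * n.factorial := by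
  induction n with
  | zero => simp
  | succ n ih =>
    have key : ((n:ℝ) + 1) ^ n ≤ Real.exp 1 * (n:ℝ) ^ n := by
      rcases Nat.eq_zero_or_pos n with h | h
      · subst h; simpa using Real.one_le_exp zero_le_one
      · have hn : (0:ℝ) < n := by exact_mod_cast h
        have h1 : (n:ℝ) + 1 = n * (1 + 1/n) := by field_simp
        have h2 : (1:ℝ) + 1/n ≤ Real.exp (1/n) := by
          have := Real.add_one_le_exp (1/n : ℝ); linarith
        calc ((n:ℝ) + 1) ^ n = (n:ℝ) ^ n * (1 + 1/n) ^ n := by rw [h1, mul_pow]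
          _ ≤ (n:ℝ) ^ n * Real.exp (1/n) ^ n := by
              gcongr
          _ = (n:ℝ) ^ n * Real.exp 1 := by
              rw [← Real.exp_nat_mul]
              congr 1
              field_simp
          _ = Real.exp 1 * (n:ℝ) ^ n := by ring
    have hnn : (0:ℝ) ≤ (n:ℝ) + 1 := by positivity
    calc ((n + 1 : ℕ) : ℝ) ^ (n + 1) = ((n:ℝ) + 1) * ((n:ℝ) + 1) ^ n := by push_cast; ring
      _ ≤ ((n:ℝ) + 1) * (Real.exp 1 * (n:ℝ) ^ n) := by gcongr
      _ ≤ ((n:ℝ) + 1) * (Real.exp 1 * (Real.exp n * n.factorial)) := by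
          have he : (0:ℝ) ≤ Real.exp 1 := Real.exp_nonneg 1
          gcongr
      _ = Real.exp ((n:ℝ) + 1) * (((n:ℝ) + 1) * n.factorial) := by
          rw [Real.exp_add]; ring
      _ = Real.exp ((n + 1 : ℕ) : ℝ) * ((n + 1).factorial) := by
          rw [Nat.factorial_succ]; push_cast; ring

lemma pow_div_factorial_le {lam : ℝ} (hl : 0 ≤ lam) (n : ℕ) (hn : 1 ≤ n)
    (h : lam * Real.exp 1 ^ 2 ≤ n) : lam ^ n / n.factorial ≤ Real.exp (-(n:ℝ)) := by
  have hn0 : (0:ℝ) < n := by exact_mod_cast hn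
  have he : (0:ℝ) < Real.exp 1 ^ 2 := by positivity
  have hlam : lam ≤ (n:ℝ) / Real.exp 1 ^ 2 := by rw [le_div_iff₀ he]; linarith
  have hf : (0:ℝ) < n.factorial := by exact_mod_cast n.factorial_pos
  rw [div_le_iff₀ hf]
  have hE : ((Real.exp 1 ^ 2 : ℝ) ^ n) = Real.exp (2 * n) := by
    rw [← pow_mul, ← Real.exp_nat_mul]
    congr 1
    push_cast
    ring
  calc lam ^ n ≤ ((n:ℝ) / Real.exp 1 ^ 2) ^ n := pow_le_pow_left₀ hl hlam n
    _ = (n:ℝ) ^ n / (Real.exp 1 ^ 2) ^ n := div_pow _ _ _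
    _ ≤ (Real.exp n * n.factorial) / (Real.exp 1 ^ 2) ^ n := by
        gcongr
        exact nat_pow_le_exp_mul_factorial n
    _ = Real.exp (-(n:ℝ)) * n.factorial := by
        rw [hE]
        rw [show Real.exp ((n:ℝ)) * (n.factorial : ℝ) / Real.exp (2 * n)
            = Real.exp ((n:ℝ)) / Real.exp (2 * (n:ℝ)) * n.factorial by ring]
        rw [← Real.exp_sub]
        congr 2
        ring

lemma exp_sub_sum_le (z : ℝ) (t : ℕ) (h : |z| * Real.exp 1 ^ 2 ≤ t) :
    |Real.exp z - ∑ k ∈ range (t + 1), z ^ k / k.factorial| ≤ Real.exp (-(t:ℝ)) := by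
  have hsum : Summable (fun n : ℕ => z ^ n / n.factorial) := Real.summable_pow_div_factorial z
  have hexp : Real.exp z = ∑' n : ℕ, z ^ n / n.factorial := by
    rw [Real.exp_eq_exp_ℝ, NormedSpace.exp_eq_tsum_div]
  have hsplit := Summable.sum_add_tsum_nat_add (f := fun n : ℕ => z ^ n / n.factorial) (t + 1) hsum
  have hdiff : Real.exp z - ∑ k ∈ range (t + 1), z ^ k / k.factorial
      = ∑' n : ℕ, z ^ (n + (t + 1)) / (n + (t + 1)).factorial := by
    rw [hexp, ← hsplit]; ring
  rw [hdiff]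
  set r : ℝ := Real.exp (-1) with hr
  have hr0 : 0 < r := Real.exp_pos _
  have hr1 : r < 1 := Real.exp_lt_one_iff.mpr (by norm_num)
  have h2e : (2:ℝ) ≤ Real.exp 1 := by have := Real.add_one_le_exp (1:ℝ); linarith
  have hb : ∀ n : ℕ, |z ^ (n + (t + 1)) / (n + (t + 1)).factorial| ≤ r ^ (n + (t + 1)) := by
    intro n
    rw [abs_div, abs_pow, Nat.abs_cast]
    have hle : |z| * Real.exp 1 ^ 2 ≤ ((n + (t + 1) : ℕ) : ℝ) := by
      calc |z| * Real.exp 1 ^ 2 ≤ (t : ℝ) := h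
        _ ≤ ((n + (t + 1) : ℕ) : ℝ) := by push_cast; linarith [Nat.cast_nonneg (α := ℝ) n]
    have := pow_div_factorial_le (abs_nonneg z) (n + (t + 1)) (by omega) hle
    calc |z| ^ (n + (t + 1)) / ((n + (t + 1)).factorial : ℝ)
        ≤ Real.exp (-((n + (t + 1) : ℕ) : ℝ)) := this
      _ = r ^ (n + (t + 1)) := by
          rw [hr, ← Real.exp_nat_mul]
          congr 1
          push_cast
          ring
  have hsum2 : Summable (fun n : ℕ => r ^ (n + (t + 1))) := by
    simp only [pow_add]
    exact (summable_geometric_of_lt_one hr0.le hr1).mul_right _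
  have hsum1 : Summable (fun n : ℕ => z ^ (n + (t + 1)) / (n + (t + 1)).factorial) :=
    (summable_nat_add_iff (f := fun n : ℕ => z ^ n / n.factorial) (t + 1)).mpr hsum
  calc |∑' n : ℕ, z ^ (n + (t + 1)) / (n + (t + 1)).factorial|
      ≤ ∑' n : ℕ, |z ^ (n + (t + 1)) / (n + (t + 1)).factorial| := by
        have habs := norm_tsum_le_tsum_norm
          (f := fun n : ℕ => z ^ (n + (t + 1)) / (n + (t + 1)).factorial)
          (by simpa only [Real.norm_eq_abs] using hsum1.abs)
        simpa only [Real.norm_eq_abs] using habs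
    _ ≤ ∑' n : ℕ, r ^ (n + (t + 1)) := Summable.tsum_le_tsum hb hsum1.abs hsum2
    _ = r ^ (t + 1) * (1 - r)⁻¹ := by
        simp only [pow_add]
        rw [tsum_mul_right, tsum_geometric_of_lt_one hr0.le hr1]
        ring
    _ ≤ Real.exp (-(t:ℝ)) := by
        have hrhalf : r ≤ 1/2 := by
          rw [hr, Real.exp_neg]
          rw [show (1:ℝ)/2 = 2⁻¹ by norm_num]
          exact inv_anti₀ (by norm_num) h2e
        have hpos : (0:ℝ) < 1 - r := by linarith
        have hrt : r ^ (t + 1) = Real.exp (-(t:ℝ)) * r := by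
          rw [hr, ← Real.exp_nat_mul, ← Real.exp_add]
          congr 1
          push_cast
          ring
        rw [hrt, mul_assoc]
        have h5 : r * (1 - r)⁻¹ ≤ 1 := by
          rw [inv_eq_one_div, mul_one_div, div_le_one hpos]
          linarith
        calc Real.exp (-(t:ℝ)) * (r * (1 - r)⁻¹) ≤ Real.exp (-(t:ℝ)) * 1 :=
            mul_le_mul_of_nonneg_left h5 (Real.exp_nonneg _)
          _ = Real.exp (-(t:ℝ)) := mul_one _

/-- Polynomial approximation of the Gaussian `e^{-(γx)²}`: with
`t_γ = ⌈max (γ²e²/2) (ln (2/δ))⌉` and `d = ⌈√(2 t_γ ln (4/δ))⌉`, the degree-`2d`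
polynomial `e^{-γ²/2} ∑_{k=0}^{t_γ} ((-γ²/2)^k / k!) ∑_{j=0}^{d} c_{k,j} T_{2j}(x)`
is a uniform `δ`-approximation of `e^{-(γx)²}` on `[-1, 1]`. -/
theorem gaussian_chebyshev_approx (γ δ : ℝ) (hγ : 0 ≤ γ) (hδ0 : 0 < δ) (hδ : δ ≤ 1 / 2) :
    ∀ x ∈ Set.Icc (-1 : ℝ) 1,
      |Real.exp (-(γ * x) ^ 2) -
          Real.exp (-γ ^ 2 / 2) *
            ∑ k ∈ Finset.range (⌈max (γ ^ 2 * Real.exp 1 ^ 2 / 2) (Real.log (2 / δ))⌉₊ + 1),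
              (-(γ ^ 2 / 2)) ^ k / (Nat.factorial k) *
                ∑ j ∈ Finset.range
                    (⌈Real.sqrt (2 * ⌈max (γ ^ 2 * Real.exp 1 ^ 2 / 2) (Real.log (2 / δ))⌉₊ *
                      Real.log (4 / δ))⌉₊ + 1),
                  chebCoeff k j * (Polynomial.Chebyshev.T ℝ (2 * j : ℤ)).eval x| ≤ δ := by
  intro x hx
  obtain ⟨hx1, hx2⟩ := hx
  have hlog2pos : 0 < Real.log (2 / δ) := Real.log_pos (by rw [lt_div_iff₀ hδ0]; linarith)
  have hlog4pos : 0 < Real.log (4 / δ) := Real.log_pos (by rw [lt_div_iff₀ hδ0]; linarith)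
  set t : ℕ := ⌈max (γ ^ 2 * Real.exp 1 ^ 2 / 2) (Real.log (2 / δ))⌉₊ with ht
  set D : ℕ := ⌈Real.sqrt (2 * (t : ℝ) * Real.log (4 / δ))⌉₊ with hD
  have htpos : 0 < t := Nat.ceil_pos.mpr (lt_of_lt_of_le hlog2pos (le_max_right _ _))
  have htpos' : (0:ℝ) < t := by exact_mod_cast htpos
  have hlog2t : Real.log (2 / δ) ≤ (t:ℝ) := le_trans (le_max_right _ _) (Nat.le_ceil _)
  have hγt : γ ^ 2 * Real.exp 1 ^ 2 / 2 ≤ (t:ℝ) := le_trans (le_max_left _ _) (Nat.le_ceil _)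
  have hA : (0:ℝ) ≤ 2 * (t:ℝ) * Real.log (4 / δ) := by positivity
  have hDsq : 2 * (t:ℝ) * Real.log (4 / δ) ≤ (D:ℝ) ^ 2 := by
    calc 2 * (t:ℝ) * Real.log (4 / δ)
        = Real.sqrt (2 * (t:ℝ) * Real.log (4 / δ)) ^ 2 := (Real.sq_sqrt hA).symm
      _ ≤ (D:ℝ) ^ 2 := pow_le_pow_left₀ (Real.sqrt_nonneg _) (Nat.le_ceil _) 2
  set θ := Real.arccos x with hθ
  have hcx : Real.cos θ = x := Real.cos_arccos hx1 hx2
  set y := Real.cos (2 * θ) with hy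
  have hyabs : |y| ≤ 1 := Real.abs_cos_le_one _
  set lam := γ ^ 2 / 2 with hlam
  have hlam0 : 0 ≤ lam := by positivity
  have hT : ∀ j : ℕ, (Polynomial.Chebyshev.T ℝ (2 * j : ℤ)).eval x
      = Real.cos ((j:ℝ) * (2 * θ)) := by
    intro j
    rw [← hcx, Polynomial.Chebyshev.T_real_cos]
    congr 1
    push_cast
    ring
  have hyk : ∀ k : ℕ, y ^ k
      = ∑ j ∈ range (k + 1), chebCoeff k j * Real.cos ((j:ℝ) * (2 * θ)) :=
    fun k => cos_pow_eq k (2 * θ)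
  have hinner : ∀ k, k ≤ t →
      |y ^ k - ∑ j ∈ range (D + 1), chebCoeff k j * Real.cos ((j:ℝ) * (2 * θ))|
        ≤ 2 * Real.exp (-(D:ℝ) ^ 2 / (2 * (t:ℝ))) := by
    intro k hk
    rcases le_or_gt k D with hkD | hkD
    · have hzero : ∑ j ∈ Ico (k + 1) (D + 1), chebCoeff k j * Real.cos ((j:ℝ) * (2 * θ)) = 0 :=
        Finset.sum_eq_zero fun j hj => by
          rw [Finset.mem_Ico] at hj
          rw [chebCoeff_eq_zero (show k < j by omega), zero_mul]
      rw [← Finset.sum_range_add_sum_Ico (fun j => chebCoeff k j * Real.cos ((j:ℝ) * (2 * θ)))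
          (show k + 1 ≤ D + 1 by omega), hzero, add_zero, ← hyk k, sub_self, abs_zero]
      positivity
    · rw [hyk k, ← Finset.sum_range_add_sum_Ico (fun j => chebCoeff k j * Real.cos ((j:ℝ) * (2 * θ)))
          (show D + 1 ≤ k + 1 by omega), add_sub_cancel_left]
      calc |∑ j ∈ Ico (D + 1) (k + 1), chebCoeff k j * Real.cos ((j:ℝ) * (2 * θ))|
          ≤ ∑ j ∈ Ico (D + 1) (k + 1), |chebCoeff k j * Real.cos ((j:ℝ) * (2 * θ))| :=
            Finset.abs_sum_le_sum_abs _ _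
        _ ≤ ∑ j ∈ Ico (D + 1) (k + 1), chebCoeff k j := by
            refine Finset.sum_le_sum fun j hj => ?_
            rw [abs_mul]
            calc |chebCoeff k j| * |Real.cos ((j:ℝ) * (2 * θ))|
                ≤ |chebCoeff k j| * 1 := by
                  gcongr
                  exact Real.abs_cos_le_one _
              _ = chebCoeff k j := by rw [mul_one, abs_of_nonneg (chebCoeff_nonneg k j)]
        _ ≤ 2 * Real.exp (-(D:ℝ) ^ 2 / (2 * (k:ℝ))) := chebCoeff_tail_le k D (by omega)
        _ ≤ 2 * Real.exp (-(D:ℝ) ^ 2 / (2 * (t:ℝ))) := by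
            have hk0 : (0:ℝ) < k := by exact_mod_cast (show 0 < k by omega)
            have hkt : (k:ℝ) ≤ t := by exact_mod_cast hk
            apply mul_le_mul_of_nonneg_left _ (by norm_num : (0:ℝ) ≤ 2)
            apply Real.exp_le_exp.mpr
            rw [neg_div, neg_div, neg_le_neg_iff]
            exact div_le_div_of_nonneg_left (by positivity) (by positivity) (by linarith)
  -- rewrite Chebyshev evaluations as cosines
  have hTrw : ∑ k ∈ range (t + 1), (-lam) ^ k / (Nat.factorial k : ℝ) *
        ∑ j ∈ range (D + 1), chebCoeff k j * (Polynomial.Chebyshev.T ℝ (2 * j : ℤ)).eval x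
      = ∑ k ∈ range (t + 1), (-lam) ^ k / (Nat.factorial k : ℝ) *
        ∑ j ∈ range (D + 1), chebCoeff k j * Real.cos ((j:ℝ) * (2 * θ)) := by
    refine Finset.sum_congr rfl fun k _ => ?_
    congr 1
    exact Finset.sum_congr rfl fun j _ => by rw [hT j]
  rw [hTrw]
  have hexpneg : Real.exp (-γ ^ 2 / 2) = Real.exp (-lam) := by
    congr 1
    rw [hlam]; ring
  have hexp_eq : Real.exp (-(γ * x) ^ 2) = Real.exp (-lam) * Real.exp (-lam * y) := by
    rw [← Real.exp_add]
    congr 1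
    have hy' : y = 2 * x ^ 2 - 1 := by rw [hy, Real.cos_two_mul, hcx]
    rw [hy', hlam]; ring
  set Inner : ℕ → ℝ := fun k => ∑ j ∈ range (D + 1), chebCoeff k j * Real.cos ((j:ℝ) * (2 * θ))
    with hInner
  set S := ∑ k ∈ range (t + 1), (-lam) ^ k / (Nat.factorial k : ℝ) * Inner k with hS
  set P := ∑ k ∈ range (t + 1), (-lam * y) ^ k / (Nat.factorial k : ℝ) with hP
  have habs : |Real.exp (-(γ * x) ^ 2) - Real.exp (-γ ^ 2 / 2) * S|
      = Real.exp (-lam) * |Real.exp (-lam * y) - S| := by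
    rw [hexp_eq, hexpneg, ← mul_sub, abs_mul, abs_of_pos (Real.exp_pos _)]
  rw [habs]
  have htail : |Real.exp (-lam * y) - P| ≤ Real.exp (-(t:ℝ)) := by
    apply exp_sub_sum_le
    have : |(-lam * y)| = lam * |y| := by
      rw [abs_mul, abs_neg, abs_of_nonneg hlam0]
    rw [this]
    calc lam * |y| * Real.exp 1 ^ 2 ≤ lam * 1 * Real.exp 1 ^ 2 := by
          apply mul_le_mul_of_nonneg_right _ (by positivity)
          exact mul_le_mul_of_nonneg_left hyabs hlam0
      _ = γ ^ 2 * Real.exp 1 ^ 2 / 2 := by rw [hlam]; ring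
      _ ≤ (t:ℝ) := hγt
  have hPS : |P - S| ≤ Real.exp lam * (2 * Real.exp (-(D:ℝ) ^ 2 / (2 * (t:ℝ)))) := by
    have hPS1 : P - S = ∑ k ∈ range (t + 1),
        (-lam) ^ k / (Nat.factorial k : ℝ) * (y ^ k - Inner k) := by
      rw [hP, hS, ← Finset.sum_sub_distrib]
      refine Finset.sum_congr rfl fun k _ => ?_
      rw [mul_pow]
      ring
    rw [hPS1]
    calc |∑ k ∈ range (t + 1), (-lam) ^ k / (Nat.factorial k : ℝ) * (y ^ k - Inner k)|
        ≤ ∑ k ∈ range (t + 1), |(-lam) ^ k / (Nat.factorial k : ℝ) * (y ^ k - Inner k)| :=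
          Finset.abs_sum_le_sum_abs _ _
      _ ≤ ∑ k ∈ range (t + 1), lam ^ k / (Nat.factorial k : ℝ)
            * (2 * Real.exp (-(D:ℝ) ^ 2 / (2 * (t:ℝ)))) := by
          refine Finset.sum_le_sum fun k hk => ?_
          rw [Finset.mem_range] at hk
          rw [abs_mul, abs_div, abs_pow, abs_neg, abs_of_nonneg hlam0, Nat.abs_cast]
          exact mul_le_mul_of_nonneg_left (hinner k (by omega)) (by positivity)
      _ = (∑ k ∈ range (t + 1), lam ^ k / (Nat.factorial k : ℝ))
            * (2 * Real.exp (-(D:ℝ) ^ 2 / (2 * (t:ℝ)))) := by rw [← Finset.sum_mul]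
      _ ≤ Real.exp lam * (2 * Real.exp (-(D:ℝ) ^ 2 / (2 * (t:ℝ)))) := by
          apply mul_le_mul_of_nonneg_right (Real.sum_le_exp_of_nonneg hlam0 _) (by positivity)
  have hfinal1 : Real.exp (-(t:ℝ)) ≤ δ / 2 := by
    calc Real.exp (-(t:ℝ)) ≤ Real.exp (-Real.log (2 / δ)) := by
          apply Real.exp_le_exp.mpr
          linarith
      _ = δ / 2 := by
          rw [Real.exp_neg, Real.exp_log (by positivity)]
          rw [inv_div]
  have hfinal2 : 2 * Real.exp (-(D:ℝ) ^ 2 / (2 * (t:ℝ))) ≤ δ / 2 := by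
    have h1 : Real.log (4 / δ) ≤ (D:ℝ) ^ 2 / (2 * (t:ℝ)) := by
      rw [le_div_iff₀ (by positivity)]
      calc Real.log (4 / δ) * (2 * (t:ℝ)) = 2 * (t:ℝ) * Real.log (4 / δ) := by ring
        _ ≤ (D:ℝ) ^ 2 := hDsq
    have h2 : Real.exp (-(D:ℝ) ^ 2 / (2 * (t:ℝ))) ≤ δ / 4 := by
      calc Real.exp (-(D:ℝ) ^ 2 / (2 * (t:ℝ))) ≤ Real.exp (-Real.log (4 / δ)) := by
            apply Real.exp_le_exp.mpr
            rw [neg_div]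
            linarith
        _ = δ / 4 := by
            rw [Real.exp_neg, Real.exp_log (by positivity), inv_div]
    linarith
  calc Real.exp (-lam) * |Real.exp (-lam * y) - S|
      ≤ Real.exp (-lam) * (|Real.exp (-lam * y) - P| + |P - S|) := by
        apply mul_le_mul_of_nonneg_left _ (Real.exp_nonneg _)
        calc |Real.exp (-lam * y) - S| = |(Real.exp (-lam * y) - P) + (P - S)| := by ring_nf
          _ ≤ |Real.exp (-lam * y) - P| + |P - S| := abs_add_le _ _
    _ ≤ Real.exp (-lam) * (Real.exp (-(t:ℝ))
          + Real.exp lam * (2 * Real.exp (-(D:ℝ) ^ 2 / (2 * (t:ℝ))))) := by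
        apply mul_le_mul_of_nonneg_left _ (Real.exp_nonneg _)
        exact add_le_add htail hPS
    _ = Real.exp (-lam) * Real.exp (-(t:ℝ)) + 2 * Real.exp (-(D:ℝ) ^ 2 / (2 * (t:ℝ))) := by
        rw [mul_add, ← mul_assoc, ← Real.exp_add (-lam) lam, neg_add_cancel, Real.exp_zero, one_mul]
    _ ≤ 1 * Real.exp (-(t:ℝ)) + 2 * Real.exp (-(D:ℝ) ^ 2 / (2 * (t:ℝ))) := by
        apply add_le_add_left
        apply mul_le_mul_of_nonneg_right _ (Real.exp_nonneg _)
        exact Real.exp_le_one_iff.mpr (by linarith)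
    _ ≤ δ / 2 + δ / 2 := by
        rw [one_mul]
        exact add_le_add hfinal1 hfinal2
    _ = δ := by ring
end
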